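/- Let λ ∈ (0, 1], p ∈ (0, 1], let ω be holomorphic on the open unit disk D with |ω(z)| ≤ 1 for all z ∈ D, let c ∈ ℂ, and set A(z) = 1 + c·z − λ·z·∫₀ᶻ ω(t) dt (segment integral). Suppose there exists c₀ ∈ [0, 1) such that |∫₀ᶻ ω(t) dt| ≤ c₀·|z| for all z with |z| ≤ p, and suppose |c| = (1 + λ·p²)/p. Then, with r = (1 + λ·c₀·p²)/(1 + λ·p²) ∈ (0, 1), the function A has a zero z₀ with |z₀| ≤ p·r < p. (This is the step in the equality analysis of Theorem 3 showing that an extremal function must have |∫₀ᶻ ω(t) dt| = |z| somewhere on every circle, forcing ω to be a unimodular constant.) -/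

import Mathlib

/-!
On the circle `|z| = p r` one has `|c z| = 1 + λ c₀ p²`, so `|1 + c z| ≥ λ c₀ p²`, while the
perturbation `λ z ∫₀ᶻ ω` has modulus at most `λ c₀ p² r² < λ c₀ p²` (for `c₀ > 0`). Hence `A`
stays closer to `1 + c z` than `1 + c z` is to `0`, and a one-sided Rouché argument transfers the
root `-1/c` of `1 + c z`, of modulus `p / (1 + λ p²) < p r`, to a root of `A`. The Rouché step is
the maximum modulus principle applied to `exp (-(1 + c z) / A)`. The segment integral is
holomorphic because it coincides with a primitive of `ω` on the disk.
-/

open Complex Metric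

/-- Contour integral of `ω` along the straight line segment from `z₁` to `z₂`:
`∫_{z₁}^{z₂} ω(t) dt = (z₂ - z₁) ∫₀¹ ω(z₁ + s (z₂ - z₁)) ds`. -/
noncomputable def segInt (ω : ℂ → ℂ) (z₁ z₂ : ℂ) : ℂ :=
  (z₂ - z₁) * ∫ s in (0:ℝ)..(1:ℝ), ω (z₁ + (s : ℂ) * (z₂ - z₁))

theorem segInt_eq_sub_of_hasDerivAt {ω F : ℂ → ℂ} {U : Set ℂ} {z₁ z₂ : ℂ}
    (hU : segment ℝ z₁ z₂ ⊆ U) (hF : ∀ z ∈ U, HasDerivAt F (ω z) z) (hω : ContinuousOn ω U) :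
    segInt ω z₁ z₂ = F z₂ - F z₁ := by
  set γ : ℝ → ℂ := fun s => z₁ + (s : ℂ) * (z₂ - z₁)
  have hγ : ∀ s ∈ Set.Icc (0:ℝ) 1, γ s ∈ U := fun s hs =>
    hU ((segment_eq_image' ℝ z₁ z₂).symm ▸ ⟨s, hs, by simp [γ, Complex.real_smul]⟩)
  have hderiv : ∀ s ∈ Set.uIcc (0:ℝ) 1, HasDerivAt (F ∘ γ) ((z₂ - z₁) * ω (γ s)) s := by
    intro s hs
    rw [Set.uIcc_of_le zero_le_one] at hs
    have hγ' : HasDerivAt γ (z₂ - z₁) s := by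
      simpa [γ] using (((hasDerivAt_id (s : ℂ)).mul_const (z₂ - z₁)).const_add z₁).comp_ofReal
    simpa [mul_comm] using (hF _ (hγ s hs)).comp s hγ'
  have hint : IntervalIntegrable (fun s => (z₂ - z₁) * ω (γ s)) MeasureTheory.volume 0 1 := by
    refine (continuousOn_const.mul (hω.comp (by fun_prop) fun s hs => ?_)).intervalIntegrable
    exact hγ s (by rwa [Set.uIcc_of_le zero_le_one] at hs)
  rw [segInt, ← intervalIntegral.integral_const_mul,
    intervalIntegral.integral_eq_sub_of_hasDerivAt hderiv hint]
  simp [γ]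

theorem differentiableOn_segInt_ball {ω : ℂ → ℂ} {z₀ : ℂ} {r : ℝ}
    (hω : DifferentiableOn ℂ ω (ball z₀ r)) : DifferentiableOn ℂ (segInt ω z₀) (ball z₀ r) := by
  obtain ⟨F, hF⟩ := hω.isExactOn_ball
  have hF' : DifferentiableOn ℂ (fun z => F z - F z₀) (ball z₀ r) := fun z hz =>
    ((hF z hz).differentiableAt.sub_const _).differentiableWithinAt
  refine hF'.congr fun z hz => segInt_eq_sub_of_hasDerivAt ?_ hF hω.continuousOn
  exact (convex_ball z₀ r).segment_subset (mem_ball_self (dist_nonneg.trans_lt hz)) hz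

theorem Complex.re_div_pos_of_norm_sub_lt {a b : ℂ} (h : ‖a - b‖ < ‖b‖) : 0 < (b / a).re := by
  have ha : a ≠ 0 := by rintro rfl; simp at h
  have hsq : ‖a - b‖ ^ 2 < ‖b‖ ^ 2 := by gcongr
  simp only [Complex.sq_norm, normSq_apply, sub_re, sub_im] at hsq
  rw [div_re, ← add_div]
  exact div_pos (by nlinarith [sq_nonneg a.re, sq_nonneg a.im]) (normSq_pos.mpr ha)

theorem DiffContOnCl.exists_eq_zero_of_norm_sub_lt {f g : ℂ → ℂ} {z₀ w : ℂ} {R : ℝ}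
    (hf : DiffContOnCl ℂ f (ball z₀ R)) (hg : DiffContOnCl ℂ g (ball z₀ R))
    (hw : w ∈ ball z₀ R) (hgw : g w = 0) (hfg : ∀ z ∈ sphere z₀ R, ‖f z - g z‖ < ‖g z‖) :
    ∃ z ∈ ball z₀ R, f z = 0 := by
  by_contra! hf0
  have hR : R ≠ 0 := (dist_nonneg.trans_lt hw).ne'
  have hf0' : ∀ z ∈ closure (ball z₀ R), f z ≠ 0 := by
    rw [closure_ball z₀ hR, ← ball_union_sphere]
    rintro z (hz | hz) hfz
    · exact hf0 z hz hfz
    · simpa [hfz] using hfg z hz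
  -- `exp (-g / f)` has modulus `1` at `w` but modulus `< 1` on the boundary circle
  have hφ : DiffContOnCl ℂ (fun z => exp (-(g z * (f z)⁻¹))) (ball z₀ R) :=
    differentiable_exp.comp_diffContOnCl (hg.smul (hf.inv hf0')).neg
  obtain ⟨z, hz, hmax⟩ := exists_mem_frontier_isMaxOn_norm isBounded_ball ⟨w, hw⟩ hφ
  rw [frontier_ball z₀ hR] at hz
  have hle : ‖exp (-(g w * (f w)⁻¹))‖ ≤ ‖exp (-(g z * (f z)⁻¹))‖ := hmax (subset_closure hw)
  simp only [hgw, norm_exp, neg_re, ← div_eq_mul_inv, zero_div, zero_re, neg_zero,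
    Real.exp_le_exp] at hle
  linarith [re_div_pos_of_norm_sub_lt (hfg z hz)]

theorem exists_eq_zero_of_norm_sub_one_add_mul_lt {f : ℂ → ℂ} {c : ℂ} {R : ℝ}
    (hf : DiffContOnCl ℂ f (ball 0 R)) (hc : c ≠ 0) (hcR : ‖c⁻¹‖ < R)
    (hfc : ∀ z ∈ sphere (0 : ℂ) R, ‖f z - (1 + c * z)‖ < ‖c‖ * R - 1) :
    ∃ z ∈ ball 0 R, f z = 0 := by
  refine hf.exists_eq_zero_of_norm_sub_lt (g := fun z => 1 + c * z)
    (by fun_prop : Differentiable ℂ _).diffContOnCl (w := -c⁻¹) (by simpa using hcR)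
    (by simp [hc]) fun z hz => (hfc z hz).trans_le ?_
  calc ‖c‖ * R - 1 = ‖c * z‖ - ‖(1 : ℂ)‖ := by
        rw [norm_mul, mem_sphere_zero_iff_norm.1 hz, norm_one]
    _ ≤ ‖1 + c * z‖ := by rw [add_comm]; exact norm_sub_le_norm_add _ _

theorem exists_eq_zero_of_norm_segInt_le {ω A : ℂ → ℂ} {c : ℂ} {lam c₀ R : ℝ}
    (hω : DifferentiableOn ℂ ω (ball 0 1)) (hR : R < 1) (hlam : 0 ≤ lam)
    (hA : ∀ z ∈ ball (0 : ℂ) 1, A z = 1 + c * z - (lam : ℂ) * z * segInt ω 0 z)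
    (hsmall : ∀ z ∈ sphere (0 : ℂ) R, ‖segInt ω 0 z‖ ≤ c₀ * R)
    (hc : c ≠ 0) (hcR : ‖c⁻¹‖ < R) (hcRc₀ : lam * c₀ * R ^ 2 < ‖c‖ * R - 1) :
    ∃ z ∈ ball 0 R, A z = 0 := by
  have hAd : DifferentiableOn ℂ A (ball 0 1) :=
    ((differentiableOn_const _).add ((differentiableOn_const _).mul differentiableOn_id)).sub
      (((differentiableOn_const _).mul differentiableOn_id).mul (differentiableOn_segInt_ball hω))
      |>.congr hA
  refine exists_eq_zero_of_norm_sub_one_add_mul_lt (hAd.diffContOnCl_ball (closedBall_subset_ball hR))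
    hc hcR fun z hz => lt_of_le_of_lt ?_ hcRc₀
  have hzR : ‖z‖ = R := mem_sphere_zero_iff_norm.1 hz
  calc ‖A z - (1 + c * z)‖ = lam * R * ‖segInt ω 0 z‖ := by
        rw [hA z (mem_ball_zero_iff.2 (hzR.trans_lt hR))]
        simp [abs_of_nonneg hlam, hzR]
    _ ≤ lam * R * (c₀ * R) :=
        mul_le_mul_of_nonneg_left (hsmall z hz) (mul_nonneg hlam (hzR ▸ norm_nonneg z))
    _ = lam * c₀ * R ^ 2 := by ring

theorem stmt_14_general (lam p : ℝ) (hlam : lam ∈ Set.Ioc (0 : ℝ) 1)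
    (hp : p ∈ Set.Ioc (0 : ℝ) 1)
    (ω : ℂ → ℂ) (c : ℂ)
    (hω : DifferentiableOn ℂ ω (ball (0 : ℂ) 1))
    (c₀ : ℝ) (hc₀ : c₀ ∈ Set.Ico (0 : ℝ) 1)
    (hsmall : ∀ z : ℂ, ‖z‖ ≤ p → ‖segInt ω 0 z‖ ≤ c₀ * ‖z‖)
    (hc : ‖c‖ = (1 + lam * p ^ 2) / p)
    (A : ℂ → ℂ)
    (hA : ∀ z ∈ ball (0 : ℂ) 1, A z = 1 + c * z - (lam : ℂ) * z * segInt ω 0 z) :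
    (1 + lam * c₀ * p ^ 2) / (1 + lam * p ^ 2) ∈ Set.Ioo (0 : ℝ) 1 ∧
      p * ((1 + lam * c₀ * p ^ 2) / (1 + lam * p ^ 2)) < p ∧
      ∃ z₀ : ℂ, ‖z₀‖ ≤ p * ((1 + lam * c₀ * p ^ 2) / (1 + lam * p ^ 2)) ∧
        A z₀ = 0 := by
  obtain ⟨hlam0, -⟩ := hlam
  obtain ⟨hp0, hp1⟩ := hp
  obtain ⟨hc₀0, hc₀1⟩ := hc₀
  set r := (1 + lam * c₀ * p ^ 2) / (1 + lam * p ^ 2) with hr_def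
  have hD : 0 < 1 + lam * p ^ 2 := by positivity
  have hr : r ∈ Set.Ioo 0 1 :=
    ⟨by positivity, (div_lt_one hD).2 (by nlinarith [mul_pos hlam0 (pow_pos hp0 2)])⟩
  have hpr : p * r < p := mul_lt_of_lt_one_right hp0 hr.2
  refine ⟨hr, hpr, ?_⟩
  have hc_ne : c ≠ 0 := norm_pos_iff.1 (by rw [hc]; positivity)
  have hc_inv : ‖c⁻¹‖ = p / (1 + lam * p ^ 2) := by rw [norm_inv, hc, inv_div]
  rcases hc₀0.eq_or_lt with rfl | hc₀0
  · -- `A` is then linear on the disk of radius `p`, with root `-c⁻¹` on the circle of radius `p r`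
    have hw : ‖-c⁻¹‖ = p * r := by rw [norm_neg, hc_inv, hr_def]; ring
    have hS : segInt ω 0 (-c⁻¹) = 0 :=
      norm_le_zero_iff.1 (by simpa using hsmall (-c⁻¹) (by linarith))
    refine ⟨-c⁻¹, hw.le, ?_⟩
    rw [hA _ (mem_ball_zero_iff.2 (by linarith)), hS]
    field_simp
    ring
  · have hcR : ‖c⁻¹‖ < p * r := by
      rw [hc_inv, hr_def, ← mul_div_assoc, div_lt_div_iff_of_pos_right hD]
      nlinarith [mul_pos hlam0 (mul_pos hc₀0 (pow_pos hp0 3))]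
    have hcRc₀ : lam * c₀ * (p * r) ^ 2 < ‖c‖ * (p * r) - 1 := calc
      lam * c₀ * (p * r) ^ 2 = lam * c₀ * p ^ 2 * r ^ 2 := by ring
      _ < lam * c₀ * p ^ 2 :=
        mul_lt_of_lt_one_right (by positivity) (pow_lt_one₀ hr.1.le hr.2 two_ne_zero)
      _ = ‖c‖ * (p * r) - 1 := by rw [hc, hr_def]; field_simp; ring
    obtain ⟨z, hz, hAz⟩ := exists_eq_zero_of_norm_segInt_le hω (hpr.trans_le hp1) hlam0.le hA
      (fun z hz => by
        rw [mem_sphere_zero_iff_norm] at hz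
        simpa [hz] using hsmall z (by linarith))
      hc_ne hcR hcRc₀
    exact ⟨z, (mem_ball_zero_iff.1 hz).le, hAz⟩

/-- Equality analysis in Theorem 3: if `|∫₀ᶻ ω(t) dt| ≤ c₀ |z|` on `{|z| ≤ p}`
for some `c₀ ∈ [0,1)`, and `|c| = (1 + λ p²)/p`, then with
`r = (1 + λ c₀ p²)/(1 + λ p²) ∈ (0,1)` the function
`A(z) = 1 + c z - λ z ∫₀ᶻ ω(t) dt` has a zero `z₀` with `|z₀| ≤ p r < p`. -/
theorem stmt_14 (lam p : ℝ) (hlam : lam ∈ Set.Ioc (0 : ℝ) 1)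
    (hp : p ∈ Set.Ioc (0 : ℝ) 1)
    (ω : ℂ → ℂ) (c : ℂ)
    (hω : DifferentiableOn ℂ ω (ball (0 : ℂ) 1))
    (hbd : ∀ z ∈ ball (0 : ℂ) 1, ‖ω z‖ ≤ 1)
    (c₀ : ℝ) (hc₀ : c₀ ∈ Set.Ico (0 : ℝ) 1)
    (hsmall : ∀ z : ℂ, ‖z‖ ≤ p → ‖segInt ω 0 z‖ ≤ c₀ * ‖z‖)
    (hc : ‖c‖ = (1 + lam * p ^ 2) / p)
    (A : ℂ → ℂ)
    (hA : ∀ z ∈ ball (0 : ℂ) 1, A z = 1 + c * z - (lam : ℂ) * z * segInt ω 0 z) :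
    (1 + lam * c₀ * p ^ 2) / (1 + lam * p ^ 2) ∈ Set.Ioo (0 : ℝ) 1 ∧
      p * ((1 + lam * c₀ * p ^ 2) / (1 + lam * p ^ 2)) < p ∧
      ∃ z₀ : ℂ, ‖z₀‖ ≤ p * ((1 + lam * c₀ * p ^ 2) / (1 + lam * p ^ 2)) ∧
        A z₀ = 0 :=
  stmt_14_general lam p hlam hp ω c hω c₀ hc₀ hsmall hc A hA
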